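/- arXiv:0908.0443 — 8 statements merged into one kernel-verified Lean document; each statement's English description precedes it below -/
import Mathlib

section
/- Let k be a field and let R be a finitely generated commutative k-algebra. For every increasing chain B₀ ⊆ B₁ ⊆ B₂ ⊆ … of k-subalgebras of R there exists an index N such that for all n ≥ N and all k-algebra homomorphisms φ, ψ : R → k one has: φ and ψ agree on B_N if and only if φ and ψ agree on B_n. (In other words, the equivalence relations on the set of k-points of Spec R induced by the subalgebras B_i stabilize.) -/
/-!
A `k`-algebra map `φ ⊗ ψ : R ⊗[k] R → k` kills `b ⊗ 1 - 1 ⊗ b` exactly when `φ b = ψ b`, so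
`φ` and `ψ` agree on a subalgebra `B` iff `φ ⊗ ψ` kills the ideal generated by these
elements for `b ∈ B`. A chain of subalgebras gives an ascending chain of such ideals in the
Noetherian ring `R ⊗[k] R`, and that chain stabilizes.
-/

open TensorProduct Algebra.TensorProduct

namespace Subalgebra

variable {k R : Type*} [CommRing k] [CommRing R] [Algebra k R]

def separationIdeal (B : Subalgebra k R) : Ideal (R ⊗[k] R) :=
  Ideal.span ((fun b => b ⊗ₜ[k] (1 : R) - (1 : R) ⊗ₜ[k] b) '' B)

theorem separationIdeal_mono : Monotone (separationIdeal (k := k) (R := R)) :=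
  fun _ _ hle => Ideal.span_mono (Set.image_mono hle)

theorem separationIdeal_le_ker_productMap_iff {S : Type*} [CommRing S] [Algebra k S]
    (B : Subalgebra k R) (φ ψ : R →ₐ[k] S) :
    B.separationIdeal ≤ RingHom.ker (productMap φ ψ) ↔ ∀ b ∈ B, φ b = ψ b := by
  rw [separationIdeal, Ideal.span_le, Set.image_subset_iff]
  refine forall₂_congr fun b _ => ?_
  simp [sub_eq_zero]

end Subalgebra

/-- **Stabilization of equivalence relations induced by a chain of subalgebras.**
Let `k` be a field and `R` a finitely generated commutative `k`-algebra. For every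
increasing chain `B 0 ⊆ B 1 ⊆ …` of `k`-subalgebras of `R` there is an index `N`
such that for all `n ≥ N` and all `k`-algebra homomorphisms `φ ψ : R → k`,
`φ` and `ψ` agree on `B N` iff they agree on `B n`. -/
theorem chain_of_subalgebras_stabilizes_point_separation
    (k : Type*) [Field k] (R : Type*) [CommRing R] [Algebra k R]
    [Algebra.FiniteType k R] (B : ℕ → Subalgebra k R) (hB : Monotone B) :
    ∃ N : ℕ, ∀ n : ℕ, N ≤ n → ∀ φ ψ : R →ₐ[k] k,
      ((∀ b ∈ B N, φ b = ψ b) ↔ (∀ b ∈ B n, φ b = ψ b)) := by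
  have : Algebra.FiniteType k (R ⊗[k] R) := .trans ‹_› inferInstance
  have : IsNoetherianRing (R ⊗[k] R) := Algebra.FiniteType.isNoetherianRing k _
  obtain ⟨N, hN⟩ := WellFoundedGT.monotone_chain_condition
    ⟨fun n => (B n).separationIdeal, Subalgebra.separationIdeal_mono.comp hB⟩
  refine ⟨N, fun n hn φ ψ => ?_⟩
  simp only [← Subalgebra.separationIdeal_le_ker_productMap_iff]
  rw [show (B N).separationIdeal = (B n).separationIdeal from hN n hn]
end

section
/- Let k be a field, let R be a finitely generated commutative k-algebra, and let S ⊆ R be any k-subalgebra. Then there exists a finitely generated k-subalgebra A ⊆ S which is separating for S, i.e., for all k-algebra homomorphisms φ, ψ : R → k, if φ(a) = ψ(a) for all a ∈ A, then φ(s) = ψ(s) for all s ∈ S. -/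
/-!
Two `k`-algebra maps `φ ψ : R → B` agree at `s` exactly when `productMap φ ψ : R ⊗[k] R → B` kills
`s ⊗ 1 - 1 ⊗ s`. The elements `s ⊗ 1 - 1 ⊗ s` with `s ∈ S` span an ideal of the Noetherian ring
`R ⊗[k] R`, which is already spanned by those coming from a finite `F ⊆ S`; maps agreeing on `F`
therefore agree on all of `S`, and `F` generates the required subalgebra.
-/

open TensorProduct

theorem Submodule.exists_finite_subset_span_image_eq (R : Type*) {M α : Type*} [Semiring R]
    [AddCommMonoid M] [Module R M] [IsNoetherian R M] (f : α → M) (S : Set α) :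
    ∃ F ⊆ S, F.Finite ∧ span R (f '' F) = span R (f '' S) := by
  obtain ⟨F, hFS, hspan⟩ :=
    (fg_span_iff_fg_span_finset_subset (f '' S)).1 (IsNoetherian.noetherian (span R (f '' S)))
  exact (Set.exists_subset_image_finite_and (p := fun w => span R w = span R (f '' S))).1
    ⟨F, hFS, F.finite_toSet, hspan.symm⟩

section

variable {k R B : Type*} [CommRing k] [CommRing R] [Algebra k R] [CommRing B] [Algebra k B]

theorem Algebra.TensorProduct.productMap_tmul_one_sub_one_tmul (φ ψ : R →ₐ[k] B) (s : R) :
    productMap φ ψ (s ⊗ₜ[k] (1 : R) - 1 ⊗ₜ s) = φ s - ψ s := by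
  simp

theorem AlgHom.eq_of_tmul_one_sub_one_tmul_mem_span {φ ψ : R →ₐ[k] B} {F : Set R}
    (hF : Set.EqOn φ ψ F) {s : R}
    (hs : s ⊗ₜ[k] (1 : R) - 1 ⊗ₜ s ∈ Ideal.span ((fun f => f ⊗ₜ[k] (1 : R) - 1 ⊗ₜ f) '' F)) :
    φ s = ψ s := by
  have hker : Ideal.span ((fun f => f ⊗ₜ[k] (1 : R) - 1 ⊗ₜ f) '' F) ≤
      RingHom.ker (Algebra.TensorProduct.productMap φ ψ) := by
    refine Ideal.span_le.2 ?_
    rintro _ ⟨f, hf, rfl⟩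
    simp [hF hf]
  have := hker hs
  rwa [RingHom.mem_ker, Algebra.TensorProduct.productMap_tmul_one_sub_one_tmul,
    sub_eq_zero] at this

end

theorem AlgHom.exists_finite_subset_eqOn_of_eqOn {k R : Type*} [CommRing k] [CommRing R]
    [Algebra k R] [IsNoetherianRing (R ⊗[k] R)] (S : Set R) :
    ∃ F ⊆ S, F.Finite ∧ ∀ (B : Type*) [CommRing B] [Algebra k B] (φ ψ : R →ₐ[k] B),
      Set.EqOn φ ψ F → Set.EqOn φ ψ S := by
  obtain ⟨F, hFS, hF, hspan⟩ := Submodule.exists_finite_subset_span_image_eq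
    (R ⊗[k] R) (fun s => s ⊗ₜ[k] (1 : R) - 1 ⊗ₜ s) S
  exact ⟨F, hFS, hF, fun B _ _ φ ψ hφψ s hs => AlgHom.eq_of_tmul_one_sub_one_tmul_mem_span hφψ
    (hspan.ge (Submodule.subset_span ⟨s, hs, rfl⟩))⟩

/-- **Existence of finitely generated separating subalgebras (Derksen–Kemper).**
Let `k` be a field, `R` a finitely generated commutative `k`-algebra and `S ⊆ R`
any `k`-subalgebra. Then there is a finitely generated `k`-subalgebra `A ⊆ S`
which is separating for `S`: any two `k`-algebra homomorphisms `R → k` that agree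
on `A` already agree on `S`. -/
theorem exists_finitelyGenerated_separating_subalgebra
    (k : Type*) [Field k] (R : Type*) [CommRing R] [Algebra k R]
    [Algebra.FiniteType k R] (S : Subalgebra k R) :
    ∃ A : Subalgebra k R, A ≤ S ∧ A.FG ∧
      ∀ φ ψ : R →ₐ[k] k, (∀ a ∈ A, φ a = ψ a) → ∀ s ∈ S, φ s = ψ s := by
  have : Algebra.FiniteType k (R ⊗[k] R) :=
    .trans (S := R) inferInstance inferInstance
  have : IsNoetherianRing (R ⊗[k] R) := Algebra.FiniteType.isNoetherianRing k _
  obtain ⟨F, hFS, hF, hsep⟩ := AlgHom.exists_finite_subset_eqOn_of_eqOn (k := k) (S : Set R)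
  refine ⟨Algebra.adjoin k F, Algebra.adjoin_le hFS, Subalgebra.fg_def.2 ⟨F, hF, rfl⟩, ?_⟩
  intro φ ψ hA s hs
  exact hsep k φ ψ (fun f hf => hA f (Algebra.subset_adjoin hf)) hs
end

section
/- Let K be an algebraically closed field. The set Y = {(u,v,w) ∈ K³ : u ≠ 0 or v ≠ 0} ∪ {(0,0,0)} is not open in the Zariski topology on K³; that is, there is no set S of polynomials in three variables over K such that Y = {p ∈ K³ : f(p) ≠ 0 for some f ∈ S}. -/
/-- **Non-openness of the image `Y` in the Zariski topology.**
Over an algebraically closed field `K`, the set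
`Y = {(u,v,w) ∈ K³ : u ≠ 0 or v ≠ 0} ∪ {(0,0,0)}` is not Zariski-open in `K³`:
there is no set `S` of polynomials in three variables such that `Y` is the set of
points at which some member of `S` does not vanish. -/
theorem image_of_quotient_map_not_zariski_open
    (K : Type*) [Field K] [IsAlgClosed K] :
    ¬ ∃ S : Set (MvPolynomial (Fin 3) K),
      ({p : Fin 3 → K | p 0 ≠ 0 ∨ p 1 ≠ 0} ∪ {fun _ => (0 : K)}) =
        {p : Fin 3 → K | ∃ f ∈ S, MvPolynomial.eval p f ≠ 0} := by
  classical
  rintro ⟨S, hS⟩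
  have key : ∀ (v : Fin 3 → K) (q : MvPolynomial (Fin 3) K),
      MvPolynomial.eval v q = MvPolynomial.aeval v q := fun v q => rfl
  -- the origin is in Y
  have h0 : (fun _ => (0 : K)) ∈
      {p : Fin 3 → K | ∃ f ∈ S, MvPolynomial.eval p f ≠ 0} := by
    rw [← hS]; right; rfl
  obtain ⟨f, hfS, hf0⟩ := h0
  -- restrict f to the line (0,0,w)
  set g : Polynomial K :=
    MvPolynomial.aeval (fun i : Fin 3 => if i = 2 then Polynomial.X else 0) f with hg
  have hgeval : ∀ w : K, g.eval w =
      MvPolynomial.eval (fun i : Fin 3 => if i = 2 then w else 0) f := by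
    intro w
    rw [hg, ← Polynomial.coe_aeval_eq_eval,
      MvPolynomial.comp_aeval_apply, key]
    congr 2
    funext i
    by_cases h : i = 2 <;> simp [h]
  have hg0 : g.eval 0 ≠ 0 := by
    rw [hgeval]
    simpa only [ite_self] using hf0
  have hgne : g ≠ 0 := fun h => hg0 (by simp [h])
  obtain ⟨w, hw⟩ := Infinite.exists_notMem_finset (insert (0:K) g.roots.toFinset)
  simp only [Finset.mem_insert, Multiset.mem_toFinset, not_or] at hw
  obtain ⟨hw0, hwr⟩ := hw
  have hgw : g.eval w ≠ 0 := fun h => hwr ((Polynomial.mem_roots hgne).2 h)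
  set p : Fin 3 → K := fun i => if i = 2 then w else 0 with hp
  have hpY : p ∈ ({q : Fin 3 → K | q 0 ≠ 0 ∨ q 1 ≠ 0} ∪ {fun _ => (0 : K)}) := by
    rw [hS]
    exact ⟨f, hfS, by rw [← hgeval]; exact hgw⟩
  rcases hpY with h | h
  · simp [hp] at h
  · exact hw0 (by have := congrFun h 2; simpa [hp] using this)
end

section
/- For λ ∈ ℂ let τ_λ be the ℂ-algebra automorphism of ℂ[x₁,x₂,x₃,x₄] determined by τ_λ(x₁) = x₁, τ_λ(x₂) = x₂ + λx₁, τ_λ(x₃) = x₃ + λx₂ + (1/2)λ²x₁, τ_λ(x₄) = x₄ + λ(x₂² − 2x₁x₃ − 1). Then the polynomials f₁ = x₁, f₂ = x₂² − 2x₁x₃, f₃ = x₁x₄ − x₂(x₂² − 2x₁x₃ − 1), and the polynomial f₄ satisfying f₁·f₄ = f₃² − f₂(1−f₂)², are fixed by τ_λ for every λ ∈ ℂ. -/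
open MvPolynomial

/-- The comorphism `τ_λ` of Winkelmann's additive group action on `ℂ⁴`:
`x₁ ↦ x₁`, `x₂ ↦ x₂ + λx₁`, `x₃ ↦ x₃ + λx₂ + (1/2)λ²x₁`,
`x₄ ↦ x₄ + λ(x₂² - 2x₁x₃ - 1)` (variables `X 0, X 1, X 2, X 3`). -/
noncomputable def winkTau (l : ℂ) :
    MvPolynomial (Fin 4) ℂ →ₐ[ℂ] MvPolynomial (Fin 4) ℂ :=
  aeval ![X 0, X 1 + C l * X 0,
          X 2 + C l * X 1 + C ((1/2) * l^2) * X 0,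
          X 3 + C l * (X 1 ^ 2 - 2 * X 0 * X 2 - 1)]

/-- `f₁ = x₁`. -/
noncomputable def winkF₁ : MvPolynomial (Fin 4) ℂ := X 0

/-- `f₂ = x₂² - 2x₁x₃`. -/
noncomputable def winkF₂ : MvPolynomial (Fin 4) ℂ := X 1 ^ 2 - 2 * X 0 * X 2

/-- `f₃ = x₁x₄ - x₂(x₂² - 2x₁x₃ - 1)`. -/
noncomputable def winkF₃ : MvPolynomial (Fin 4) ℂ :=
  X 0 * X 3 - X 1 * (X 1 ^ 2 - 2 * X 0 * X 2 - 1)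

/-!
Writing `τ_λ(x₄) = x₄ + λ(f₂ - 1)`, the invariance of `f₃ = x₁x₄ - x₂(f₂ - 1)` reduces to
that of `f₁` and `f₂`, and the only genuine cancellation, for `f₂`, is `λ² - 2 · (λ²/2) = 0`.
Finally `f₁ · τ_λ(f₄) = τ_λ(f₁ f₄) = f₁ f₄`, and `f₁ = x₁` is a non-zero-divisor.
-/

theorem map_eq_self_of_mul_eq {M F : Type*} [Mul M] [FunLike F M M] [MulHomClass F M M]
    (σ : F) {a b f : M} (ha : IsLeftRegular a) (hσa : σ a = a) (hσb : σ b = b)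
    (h : a * f = b) : σ f = f :=
  ha <| calc a * σ f = σ (a * f) := by rw [map_mul, hσa]
    _ = a * f := by rw [h, hσb]

section

variable (l : ℂ)

theorem winkTau_X_zero : winkTau l (X 0) = X 0 := aeval_X _ _

theorem winkTau_X_one : winkTau l (X 1) = X 1 + C l * X 0 := aeval_X _ _

theorem winkTau_X_two : winkTau l (X 2) = X 2 + C l * X 1 + C ((1 / 2) * l ^ 2) * X 0 :=
  aeval_X _ _

theorem winkTau_X_three : winkTau l (X 3) = X 3 + C l * (winkF₂ - 1) := aeval_X _ _

theorem winkTau_winkF₁ : winkTau l winkF₁ = winkF₁ := winkTau_X_zero l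

theorem winkTau_winkF₂ : winkTau l winkF₂ = winkF₂ := by
  have half : (C l ^ 2 : MvPolynomial (Fin 4) ℂ) = 2 * C ((1 / 2) * l ^ 2) := by
    rw [← C_pow, ← map_ofNat C 2, ← C_mul]
    ring_nf
  rw [winkF₂, map_sub, map_mul, map_mul, map_pow, map_ofNat, winkTau_X_zero, winkTau_X_one,
    winkTau_X_two]
  linear_combination X 0 ^ 2 * half

theorem winkF₃_eq : winkF₃ = X 0 * X 3 - X 1 * (winkF₂ - 1) := rfl

theorem winkTau_winkF₃ : winkTau l winkF₃ = winkF₃ := by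
  rw [winkF₃_eq, map_sub, map_mul, map_mul, map_sub, map_one, winkTau_winkF₂, winkTau_X_zero,
    winkTau_X_one, winkTau_X_three]
  ring

end

/-- **`f₁, f₂, f₃, f₄` are invariants of Winkelmann's action:**
each is fixed by `τ_λ` for every `λ ∈ ℂ`, where `f₄` is the polynomial with
`f₁ f₄ = f₃² - f₂(1 - f₂)²`. -/
theorem winkelmann_generators_are_invariant
    (f₄ : MvPolynomial (Fin 4) ℂ)
    (hf₄ : winkF₁ * f₄ = winkF₃ ^ 2 - winkF₂ * (1 - winkF₂) ^ 2) (l : ℂ) :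
    winkTau l winkF₁ = winkF₁ ∧ winkTau l winkF₂ = winkF₂ ∧
      winkTau l winkF₃ = winkF₃ ∧ winkTau l f₄ = f₄ := by
  refine ⟨winkTau_winkF₁ l, winkTau_winkF₂ l, winkTau_winkF₃ l, ?_⟩
  refine map_eq_self_of_mul_eq (winkTau l) ((IsRegular.of_ne_zero (X_ne_zero 0)).left)
    (winkTau_winkF₁ l) ?_ hf₄
  simp only [map_sub, map_mul, map_pow, map_one, winkTau_winkF₂, winkTau_winkF₃]
end

section
/- Let K be a field. Let X be the set of 2×3 matrices over K whose first column is nonzero. Then the image of X under the minors map M ↦ (Δ₁₂(M), Δ₂₃(M), Δ₁₃(M)) equals {(u,v,w) ∈ K³ : u ≠ 0 or w ≠ 0} ∪ {(0,0,0)}, where Δ_{jk}(M) = M₁ⱼM₂ₖ − M₁ₖM₂ⱼ. -/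
/-!
Every row `(p, q, r)` of `M` satisfies `p Δ₂₃ - q Δ₁₃ + r Δ₁₂ = 0`, the expansion of the
vanishing 3×3 determinant obtained by stacking that row on top of `M`. So if `Δ₁₂ = Δ₁₃ = 0`,
a nonzero entry of the first column forces `Δ₂₃ = 0`. Conversely the matrix with rows
`(1, b, c)` and `(0, u, w)` has minors `(u, b w - c u, w)`, and `v = b w - c u` is solvable
in `b, c` as soon as `u ≠ 0`, `w ≠ 0` or `v = 0`.
-/

section

variable {K : Type*} [Field K]

def maximalMinors (M : Matrix (Fin 2) (Fin 3) K) : K × K × K :=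
  (M 0 0 * M 1 1 - M 0 1 * M 1 0,
   M 0 1 * M 1 2 - M 0 2 * M 1 1,
   M 0 0 * M 1 2 - M 0 2 * M 1 0)

theorem row_mul_maximalMinors_relation (M : Matrix (Fin 2) (Fin 3) K) (i : Fin 2) :
    M i 0 * (maximalMinors M).2.1 - M i 1 * (maximalMinors M).2.2
      + M i 2 * (maximalMinors M).1 = 0 := by
  fin_cases i <;> simp only [maximalMinors, Fin.zero_eta, Fin.mk_one] <;> ring

theorem maximalMinors_eq_zero_of_fst_eq_zero_of_snd_snd_eq_zero
    {M : Matrix (Fin 2) (Fin 3) K} (hM : M 0 0 ≠ 0 ∨ M 1 0 ≠ 0)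
    (h₁₂ : (maximalMinors M).1 = 0) (h₁₃ : (maximalMinors M).2.2 = 0) :
    maximalMinors M = 0 := by
  obtain ⟨i, hi⟩ : ∃ i, M i 0 ≠ 0 := by
    rcases hM with h | h
    exacts [⟨0, h⟩, ⟨1, h⟩]
  have h₂₃ : M i 0 * (maximalMinors M).2.1 = 0 := by
    simpa [h₁₂, h₁₃] using row_mul_maximalMinors_relation M i
  exact Prod.ext h₁₂ (Prod.ext ((mul_eq_zero.mp h₂₃).resolve_left hi) h₁₃)

theorem maximalMinors_of_first_column_one_zero (b c u w : K) :
    maximalMinors !![1, b, c; 0, u, w] = (u, b * w - c * u, w) := by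
  simp [maximalMinors]

theorem exists_eq_mul_sub_mul {u v w : K} (h : u ≠ 0 ∨ w ≠ 0 ∨ v = 0) :
    ∃ b c : K, v = b * w - c * u := by
  rcases h with hu | hw | hv
  · exact ⟨0, -v / u, by field_simp; ring⟩
  · exact ⟨v / w, 0, by field_simp; ring⟩
  · exact ⟨0, 0, by simp [hv]⟩

end

/-- **Image of the minors map on matrices with nonzero first column.**
Let `X` be the set of 2×3 matrices over a field `K` whose first column is nonzero.
Its image under `M ↦ (Δ₁₂(M), Δ₂₃(M), Δ₁₃(M))` equals
`{(u,v,w) : u ≠ 0 or w ≠ 0} ∪ {(0,0,0)}`. -/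
theorem image_of_minors_map_on_nonzero_first_column (K : Type*) [Field K] :
    (fun M : Matrix (Fin 2) (Fin 3) K =>
        ((M 0 0 * M 1 1 - M 0 1 * M 1 0,
          M 0 1 * M 1 2 - M 0 2 * M 1 1,
          M 0 0 * M 1 2 - M 0 2 * M 1 0) : K × K × K)) ''
      {M : Matrix (Fin 2) (Fin 3) K | M 0 0 ≠ 0 ∨ M 1 0 ≠ 0} =
      {y : K × K × K | y.1 ≠ 0 ∨ y.2.2 ≠ 0} ∪ {((0 : K), (0 : K), (0 : K))} := by
  change maximalMinors '' _ = _
  ext ⟨u, v, w⟩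
  constructor
  · rintro ⟨M, hM, hMy⟩
    by_cases hy : (maximalMinors M).1 ≠ 0 ∨ (maximalMinors M).2.2 ≠ 0
    · exact hMy ▸ Or.inl hy
    · rw [not_or, not_not, not_not] at hy
      exact Or.inr (hMy ▸ maximalMinors_eq_zero_of_fst_eq_zero_of_snd_snd_eq_zero hM hy.1 hy.2)
  · intro hy
    have hv : u ≠ 0 ∨ w ≠ 0 ∨ v = 0 := by
      rcases hy with hy | hy
      · exact hy.elim Or.inl (Or.inr ∘ Or.inl)
      · simp only [Set.mem_singleton_iff, Prod.mk.injEq] at hy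
        exact Or.inr (Or.inr hy.2.1)
    obtain ⟨b, c, rfl⟩ := exists_eq_mul_sub_mul hv
    exact ⟨!![1, b, c; 0, u, w], by simp, maximalMinors_of_first_column_one_zero b c u w⟩
end

section
/- Let K be an algebraically closed field. Let R = K[x₁,x₂,x₃,x₄]/(x₁x₄ − x₂x₃), and for λ ∈ K let τ_λ be the K-algebra automorphism of R induced by x₁ ↦ x₁, x₂ ↦ x₂, x₃ ↦ x₃ + λx₁, x₄ ↦ x₄ + λx₂ (this is well defined since x₁(x₄+λx₂) − x₂(x₃+λx₁) = x₁x₄ − x₂x₃). Then the invariant subalgebra {f ∈ R : τ_λ(f) = f for all λ ∈ K} equals the K-subalgebra of R generated by the classes of x₁ and x₂. -/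
/-! The comorphism of the parametrisation `(a, b, t) ↦ (a, b, a t, b t)` of the cone
`x₁x₄ = x₂x₃` embeds `R` into `K[a, b, t]`: modulo the relation every monomial can be rewritten
as one not divisible by `x₁x₄`, and on those monomials the induced map on exponents is injective.
Under this embedding `τ_λ` becomes the translation `t ↦ t + λ`, and since `K` is infinite a
polynomial invariant under every translation of `t` equals its value at `t = 0`, so it only
involves `a` and `b`. -/

open MvPolynomial

section Translation

variable {R σ : Type*} [CommRing R] [DecidableEq σ]

theorem aeval_update_zero_mem_adjoin (i : σ) (P : MvPolynomial σ R) :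
    aeval (Function.update X i 0) P ∈ Algebra.adjoin R (X '' {i}ᶜ : Set (MvPolynomial σ R)) := by
  induction P using MvPolynomial.induction_on with
  | C a => rw [aeval_C]; exact Subalgebra.algebraMap_mem _ a
  | add p q hp hq => rw [map_add]; exact add_mem hp hq
  | mul_X p j hp =>
    rw [map_mul, aeval_X]
    refine mul_mem hp ?_
    rcases eq_or_ne j i with rfl | hj
    · rw [Function.update_self]; exact zero_mem _
    · rw [Function.update_of_ne hj]; exact Algebra.subset_adjoin ⟨j, hj, rfl⟩

theorem eval_aeval_update (x : σ → R) (i : σ) (p P : MvPolynomial σ R) :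
    eval x (aeval (Function.update X i p) P) = eval (Function.update x i (eval x p)) P := by
  change aeval x (aeval _ P) = aeval _ P
  rw [comp_aeval_apply]
  congr 2
  funext j
  rcases eq_or_ne j i with rfl | hj <;> simp [*]

variable [IsDomain R] [Infinite R]

theorem forall_aeval_update_add_C_eq_iff_mem_adjoin (i : σ) (P : MvPolynomial σ R) :
    (∀ l : R, aeval (Function.update X i (X i + C l)) P = P) ↔
      P ∈ Algebra.adjoin R (X '' {i}ᶜ : Set (MvPolynomial σ R)) := by
  constructor
  · intro hP
    suffices aeval (Function.update X i 0) P = P from this ▸ aeval_update_zero_mem_adjoin i P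
    refine MvPolynomial.funext fun x => ?_
    calc eval x (aeval (Function.update X i 0) P)
        = eval (Function.update x i 0) (aeval (Function.update X i (X i + C (x i))) P) := by
          rw [hP, eval_aeval_update, map_zero]
      _ = eval x P := by rw [eval_aeval_update]; simp
  · intro hP l
    refine AlgHom.adjoin_le_equalizer _ (AlgHom.id R _) ?_ hP
    rintro _ ⟨j, hj, rfl⟩
    simp [Function.update_of_ne hj]

end Translation

section QuadricCone

variable {R : Type*} [CommRing R]

variable (R) in
noncomputable def quadricParam : MvPolynomial (Fin 4) R →ₐ[R] MvPolynomial (Fin 3) R :=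
  aeval ![X 0, X 1, X 0 * X 2, X 1 * X 2]

noncomputable def quadricParamExponent (m : Fin 4 →₀ ℕ) : Fin 3 →₀ ℕ :=
  Finsupp.equivFunOnFinite.symm ![m 0 + m 2, m 1 + m 3, m 2 + m 3]

theorem quadricParam_monomial (m : Fin 4 →₀ ℕ) (c : R) :
    quadricParam R (monomial m c) = monomial (quadricParamExponent m) c := by
  rw [quadricParam, aeval_monomial, monomial_eq,
    Finsupp.prod_fintype _ _ (fun _ => pow_zero _), Finsupp.prod_fintype _ _ (fun _ => pow_zero _),
    Fin.prod_univ_four, Fin.prod_univ_three]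
  simp only [quadricParamExponent, Finsupp.equivFunOnFinite_symm_apply_apply, algebraMap_eq,
    Matrix.cons_val_zero, Matrix.cons_val_one, Matrix.cons_val]
  ring

variable (R) in
noncomputable def quadricIdeal : Ideal (MvPolynomial (Fin 4) R) :=
  Ideal.span {X 0 * X 3 - X 1 * X 2}

def reducedExponents : Set (Fin 4 →₀ ℕ) := {m | m 0 = 0 ∨ m 3 = 0}

theorem injOn_quadricParamExponent : reducedExponents.InjOn quadricParamExponent := by
  intro m hm m' hm' h
  have h0 : m 0 + m 2 = m' 0 + m' 2 := DFunLike.congr_fun h 0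
  have h1 : m 1 + m 3 = m' 1 + m' 3 := DFunLike.congr_fun h 1
  have h2 : m 2 + m 3 = m' 2 + m' 3 := DFunLike.congr_fun h 2
  obtain ⟨e0, e1, e2, e3⟩ : m 0 = m' 0 ∧ m 1 = m' 1 ∧ m 2 = m' 2 ∧ m 3 = m' 3 := by
    change m 0 = 0 ∨ m 3 = 0 at hm
    change m' 0 = 0 ∨ m' 3 = 0 at hm'
    omega
  ext i
  fin_cases i <;> assumption

theorem coeff_quadricParam_quadricParamExponent {F : MvPolynomial (Fin 4) R}
    (hF : ↑F.support ⊆ reducedExponents) {m : Fin 4 →₀ ℕ} (hm : m ∈ reducedExponents) :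
    coeff (quadricParamExponent m) (quadricParam R F) = coeff m F := by
  conv_lhs => rw [F.as_sum, map_sum]
  simp only [quadricParam_monomial, coeff_sum, coeff_monomial]
  rw [Finset.sum_congr rfl fun m' hm' =>
    if_congr (injOn_quadricParamExponent.eq_iff (hF hm') hm) rfl rfl]
  simp [eq_comm]

theorem eq_zero_of_quadricParam_eq_zero {F : MvPolynomial (Fin 4) R}
    (hF : ↑F.support ⊆ reducedExponents) (h : quadricParam R F = 0) : F = 0 := by
  ext m
  by_cases hm : m ∈ F.support
  · rw [← coeff_quadricParam_quadricParamExponent hF (hF hm), h, coeff_zero, coeff_zero]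
  · rwa [coeff_zero, ← notMem_support_iff]

noncomputable def reduceExponent (m : Fin 4 →₀ ℕ) : Fin 4 →₀ ℕ :=
  Finsupp.equivFunOnFinite.symm
    ![m 0 - min (m 0) (m 3), m 1 + min (m 0) (m 3), m 2 + min (m 0) (m 3), m 3 - min (m 0) (m 3)]

theorem reduceExponent_mem_reducedExponents (m : Fin 4 →₀ ℕ) :
    reduceExponent m ∈ reducedExponents :=
  show m 0 - min (m 0) (m 3) = 0 ∨ m 3 - min (m 0) (m 3) = 0 by omega

theorem mk_monomial_eq_mk_monomial_reduceExponent (m : Fin 4 →₀ ℕ) (c : R) :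
    Ideal.Quotient.mk (quadricIdeal R) (monomial m c) =
      Ideal.Quotient.mk (quadricIdeal R) (monomial (reduceExponent m) c) := by
  set π := Ideal.Quotient.mk (quadricIdeal R)
  have hrel : π (X 0) * π (X 3) = π (X 1) * π (X 2) := by
    rw [← map_mul, ← map_mul, Ideal.Quotient.eq]
    exact Ideal.mem_span_singleton_self _
  simp only [reduceExponent, monomial_eq, Finsupp.prod_fintype _ _ (fun _ => pow_zero _),
    Fin.prod_univ_four, map_mul, map_pow, Finsupp.coe_equivFunOnFinite_symm, Matrix.cons_val]
  generalize hk : min (m 0) (m 3) = k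
  obtain ⟨a, ha⟩ : ∃ a, m 0 = a + k := ⟨m 0 - k, by omega⟩
  obtain ⟨d, hd⟩ : ∃ d, m 3 = d + k := ⟨m 3 - k, by omega⟩
  rw [ha, hd, Nat.add_sub_cancel, Nat.add_sub_cancel]
  linear_combination (π (C c) * π (X 0) ^ a * π (X 1) ^ m 1 * π (X 2) ^ m 2 * π (X 3) ^ d) *
    congrArg (· ^ k) hrel

theorem exists_support_subset_reducedExponents_mk_eq (F : MvPolynomial (Fin 4) R) :
    ∃ G : MvPolynomial (Fin 4) R, ↑G.support ⊆ reducedExponents ∧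
      Ideal.Quotient.mk (quadricIdeal R) F = Ideal.Quotient.mk (quadricIdeal R) G := by
  classical
  refine ⟨∑ m ∈ F.support, monomial (reduceExponent m) (coeff m F), fun m' hm' => ?_, ?_⟩
  · obtain ⟨m, -, hm'⟩ := Finset.mem_biUnion.mp (support_sum hm')
    rw [Finset.mem_singleton.mp (support_monomial_subset hm')]
    exact reduceExponent_mem_reducedExponents m
  · conv_lhs => rw [F.as_sum]
    rw [map_sum, map_sum]
    exact Finset.sum_congr rfl fun m _ => mk_monomial_eq_mk_monomial_reduceExponent m _

theorem quadricIdeal_le_ker_quadricParam : quadricIdeal R ≤ RingHom.ker (quadricParam R) := by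
  rw [quadricIdeal, Ideal.span_le, Set.singleton_subset_iff, SetLike.mem_coe, RingHom.mem_ker]
  simp only [quadricParam, map_sub, map_mul, aeval_X, Matrix.cons_val_zero, Matrix.cons_val_one,
    Matrix.cons_val]
  ring

theorem ker_quadricParam : RingHom.ker (quadricParam R) = quadricIdeal R := by
  refine le_antisymm (fun F hF => ?_) quadricIdeal_le_ker_quadricParam
  obtain ⟨G, hG, hFG⟩ := exists_support_subset_reducedExponents_mk_eq F
  rw [Ideal.Quotient.eq] at hFG
  have hG0 : quadricParam R G = 0 := by
    rw [← sub_sub_cancel F G, map_sub, RingHom.mem_ker.mp hF,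
      RingHom.mem_ker.mp (quadricIdeal_le_ker_quadricParam hFG), sub_zero]
  simpa [eq_zero_of_quadricParam_eq_zero hG hG0] using hFG

variable (R) in
noncomputable def quadricParamQuot :
    MvPolynomial (Fin 4) R ⧸ quadricIdeal R →ₐ[R] MvPolynomial (Fin 3) R :=
  Ideal.Quotient.liftₐ _ (quadricParam R) fun _ ha => quadricIdeal_le_ker_quadricParam ha

theorem quadricParamQuot_comp_mkₐ :
    (quadricParamQuot R).comp (Ideal.Quotient.mkₐ R (quadricIdeal R)) = quadricParam R :=
  rfl

theorem quadricParamQuot_mkₐ (F : MvPolynomial (Fin 4) R) :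
    quadricParamQuot R (Ideal.Quotient.mkₐ R (quadricIdeal R) F) = quadricParam R F :=
  rfl

theorem quadricParamQuot_injective : Function.Injective (quadricParamQuot R) :=
  RingHom.lift_injective_of_ker_le_ideal _ _ ker_quadricParam.le

theorem quadricParam_comp_aeval_shear (l : R) :
    (quadricParam R).comp (aeval ![X 0, X 1, X 2 + C l * X 0, X 3 + C l * X 1]) =
      (aeval (Function.update X 2 (X 2 + C l))).comp (quadricParam R) := by
  refine MvPolynomial.algHom_ext fun i => ?_
  fin_cases i <;> simp [quadricParam] <;> ring

end QuadricCone

/-- **Invariants of the additive group action on the quadric cone (Section 4).**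
Let `K` be algebraically closed, `R = K[x₁,x₂,x₃,x₄]/(x₁x₄ - x₂x₃)` and `τ_λ` the
`K`-algebra endomorphism of `R` induced by `x₁ ↦ x₁`, `x₂ ↦ x₂`, `x₃ ↦ x₃ + λx₁`,
`x₄ ↦ x₄ + λx₂`. An element of `R` is fixed by all `τ_λ` iff it lies in the
`K`-subalgebra generated by the classes of `x₁` and `x₂`.
(Variables: `X 0 = x₁`, `X 1 = x₂`, `X 2 = x₃`, `X 3 = x₄`.) -/
theorem invariants_of_additive_action_on_quadric_cone
    (K : Type*) [Field K] [IsAlgClosed K]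
    (I : Ideal (MvPolynomial (Fin 4) K))
    (hI : I = Ideal.span {X 0 * X 3 - X 1 * X 2})
    (τ : K → ((MvPolynomial (Fin 4) K ⧸ I) →ₐ[K] (MvPolynomial (Fin 4) K ⧸ I)))
    (hτ : ∀ l : K, (τ l).comp (Ideal.Quotient.mkₐ K I) =
      (Ideal.Quotient.mkₐ K I).comp
        (aeval ![X 0, X 1, X 2 + C l * X 0, X 3 + C l * X 1]))
    (r : MvPolynomial (Fin 4) K ⧸ I) :
    (∀ l : K, τ l r = r) ↔
      r ∈ Algebra.adjoin K
        ({Ideal.Quotient.mkₐ K I (X 0), Ideal.Quotient.mkₐ K I (X 1)} :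
          Set (MvPolynomial (Fin 4) K ⧸ I)) := by
  obtain rfl : I = quadricIdeal K := hI
  set ψ := quadricParamQuot K
  have hψτ (l : K) : ψ.comp (τ l) = (aeval (Function.update X 2 (X 2 + C l))).comp ψ :=
    Ideal.Quotient.algHom_ext _ <| by
      rw [AlgHom.comp_assoc, hτ, ← AlgHom.comp_assoc, quadricParamQuot_comp_mkₐ,
        quadricParam_comp_aeval_shear, AlgHom.comp_assoc, quadricParamQuot_comp_mkₐ]
  have hadjoin : (Algebra.adjoin K {Ideal.Quotient.mkₐ K (quadricIdeal K) (X 0),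
      Ideal.Quotient.mkₐ K (quadricIdeal K) (X 1)}).map ψ = Algebra.adjoin K (X '' {2}ᶜ) := by
    have hcompl : ({2}ᶜ : Set (Fin 3)) = {0, 1} := by ext i; fin_cases i <;> simp
    rw [AlgHom.map_adjoin, hcompl, Set.image_pair, Set.image_pair, quadricParamQuot_mkₐ,
      quadricParamQuot_mkₐ]
    simp [quadricParam]
  calc (∀ l, τ l r = r) ↔ ∀ l, aeval (Function.update X 2 (X 2 + C l)) (ψ r) = ψ r :=
        forall_congr' fun l => by
          rw [← quadricParamQuot_injective.eq_iff, ← AlgHom.comp_apply, hψτ, AlgHom.comp_apply]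
    _ ↔ ψ r ∈ Algebra.adjoin K (X '' {2}ᶜ) := forall_aeval_update_add_C_eq_iff_mem_adjoin 2 _
    _ ↔ _ := by
      rw [← hadjoin, ← SetLike.mem_coe, Subalgebra.coe_map,
        quadricParamQuot_injective.mem_set_image, SetLike.mem_coe]
end

section
/- Let K be a field and let X = {x ∈ K⁴ : x₁x₄ = x₂x₃, x ≠ (0,0,0,0)}. (a) For every x ∈ X with (x₁,x₂) ≠ (0,0) and (x₃,x₄) ≠ (0,0), the points [x₁ : x₂] and [x₃ : x₄] of the projective line ℙ(K²) coincide; hence the map φ : X → ℙ(K²) with φ(x) = [x₁ : x₂] if (x₁,x₂) ≠ (0,0) and φ(x) = [x₃ : x₄] otherwise is well defined and invariant under the action λ·(x₁,x₂,x₃,x₄) = (x₁, x₂, x₃+λx₁, x₄+λx₂). (b) There is no function ψ : K² → ℙ(K²) with ψ(x₁,x₂) = φ(x) for all x ∈ X; indeed φ takes different values at the points (0,0,1,0) and (0,0,0,1), both of which map to (0,0) under x ↦ (x₁,x₂). -/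
/-!
Over `(x₁,x₂) = 0` the quadric equation is vacuous, so on that fibre `φ` is
`(x₃,x₄) ↦ [x₃ : x₄]`, which is not constant; a map `ψ` through which `φ` factors
would make it constant.
-/

open scoped Classical

/-- The map `φ : X → ℙ(K²)` on the punctured quadric: a point is written as a pair of
pairs `x = ((x₁,x₂),(x₃,x₄))`; `φ(x) = [x₁ : x₂]` if `(x₁,x₂) ≠ 0` and
`φ(x) = [x₃ : x₄]` otherwise. -/
noncomputable def quadricPhi (K : Type*) [Field K]
    (x : (K × K) × (K × K)) (hx : x ≠ 0) : Projectivization K (K × K) :=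
  if h : x.1 ≠ 0 then Projectivization.mk K x.1 h
  else Projectivization.mk K x.2 (by
    intro h2
    exact hx (Prod.ext (not_not.mp h) h2))

namespace Projectivization

variable {K : Type*} [Field K]

theorem mk_eq_mk_of_mul_eq_mul {a b : K × K} (hq : a.1 * b.2 = a.2 * b.1)
    (ha : a ≠ 0) (hb : b ≠ 0) : mk K a ha = mk K b hb := by
  rw [mk_eq_mk_iff']
  by_cases hb₁ : b.1 = 0
  · have hb₂ : b.2 ≠ 0 := fun h => hb (Prod.ext hb₁ h)
    have ha₁ : a.1 = 0 := by simpa [hb₁, hb₂] using hq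
    refine ⟨a.2 / b.2, Prod.ext ?_ ?_⟩
    · simp [hb₁, ha₁]
    · simp [hb₂]
  · refine ⟨a.1 / b.1, Prod.ext ?_ ?_⟩
    · simp [hb₁]
    · simp only [Prod.smul_snd, smul_eq_mul]
      field_simp
      linear_combination hq

theorem mk_one_zero_ne_mk_zero_one :
    mk K ((1, 0) : K × K) (by simp) ≠ mk K (0, 1) (by simp) := by
  rw [Ne, mk_eq_mk_iff']
  rintro ⟨c, hc⟩
  simpa using congrArg Prod.fst hc

end Projectivization

section quadricPhi

variable {K : Type*} [Field K]

theorem quadricPhi_of_fst_ne_zero {a b : K × K} (ha : a ≠ 0)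
    (hx : ((a, b) : (K × K) × (K × K)) ≠ 0) :
    quadricPhi K (a, b) hx = Projectivization.mk K a ha :=
  dif_pos ha

theorem quadricPhi_zero_fst {b : K × K} (hx : (((0 : K × K), b) : (K × K) × (K × K)) ≠ 0) :
    quadricPhi K (0, b) hx = Projectivization.mk K b (fun hb => hx (by rw [hb]; rfl)) :=
  dif_neg (not_not.mpr rfl)

theorem quadricPhi_add_smul {a b : K × K} (l : K)
    (hx : ((a, b) : (K × K) × (K × K)) ≠ 0)
    (hx' : ((a, b + l • a) : (K × K) × (K × K)) ≠ 0) :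
    quadricPhi K (a, b + l • a) hx' = quadricPhi K (a, b) hx := by
  by_cases ha : a = 0
  · subst ha
    simp only [smul_zero, add_zero]
  · rw [quadricPhi_of_fst_ne_zero ha, quadricPhi_of_fst_ne_zero ha]

end quadricPhi

/-- **The invariant morphism to `ℙ₁` does not factor through `x ↦ (x₁,x₂)`.**
(a) For points `((x₁,x₂),(x₃,x₄))` of the quadric `x₁x₄ = x₂x₃` with
`(x₁,x₂) ≠ 0 ≠ (x₃,x₄)` one has `[x₁ : x₂] = [x₃ : x₄]`, and the map `φ` with
`φ(x) = [x₁ : x₂]` if `(x₁,x₂) ≠ 0`, else `[x₃ : x₄]`, is invariant under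
`λ·((x₁,x₂),(x₃,x₄)) = ((x₁,x₂),(x₃+λx₁, x₄+λx₂))`.
(b) No map `ψ : K² → ℙ(K²)` satisfies `ψ(x₁,x₂) = φ(x)` on the punctured quadric;
indeed `φ` takes different values at `((0,0),(1,0))` and `((0,0),(0,1))`. -/
theorem no_factorization_through_invariant_projection (K : Type*) [Field K] :
    (∀ (a b : K × K), a.1 * b.2 = a.2 * b.1 →
        ∀ (ha : a ≠ 0) (hb : b ≠ 0),
          Projectivization.mk K a ha = Projectivization.mk K b hb) ∧
    (∀ (a b : K × K), a.1 * b.2 = a.2 * b.1 → ∀ (l : K)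
        (hx : ((a, b) : (K × K) × (K × K)) ≠ 0)
        (hx' : ((a, b + l • a) : (K × K) × (K × K)) ≠ 0),
          quadricPhi K (a, b + l • a) hx' = quadricPhi K (a, b) hx) ∧
    (¬ ∃ ψ : K × K → Projectivization K (K × K),
        ∀ (a b : K × K) (hq : a.1 * b.2 = a.2 * b.1)
          (hx : ((a, b) : (K × K) × (K × K)) ≠ 0),
          ψ a = quadricPhi K (a, b) hx) ∧
    quadricPhi K ((0, 0), (1, 0))
        (by simp [Prod.ext_iff]) ≠
      quadricPhi K ((0, 0), (0, 1))
        (by simp [Prod.ext_iff]) := by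
  have hφ : quadricPhi K ((0, 0), (1, 0)) (by simp [Prod.ext_iff]) ≠
      quadricPhi K ((0, 0), (0, 1)) (by simp [Prod.ext_iff]) := by
    intro h
    exact Projectivization.mk_one_zero_ne_mk_zero_one
      ((quadricPhi_zero_fst _).symm.trans (h.trans (quadricPhi_zero_fst _)))
  refine ⟨fun a b hq => Projectivization.mk_eq_mk_of_mul_eq_mul hq,
    fun a b _ l => quadricPhi_add_smul l, ?_, hφ⟩
  rintro ⟨ψ, hψ⟩
  apply hφ
  rw [← hψ (0, 0) (1, 0) (by simp), ← hψ (0, 0) (0, 1) (by simp)]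
end

section
/- Fix an integer m ≥ 2 and let ρ_λ (λ ∈ ℂ) be the ℂ-algebra automorphism of ℂ[x,y,z,s,t,u,v] with ρ_λ(x) = x, ρ_λ(y) = y, ρ_λ(z) = z, ρ_λ(s) = s + λx^{m+1}, ρ_λ(t) = t + λy^{m+1}, ρ_λ(u) = u + λz^{m+1}, ρ_λ(v) = v + λx^m y^m z^m. If f ∈ ℂ[x,y,z,s,t,u,v] satisfies ρ_λ(f) = f for all λ ∈ ℂ, then the polynomial obtained from f by substituting x = y = z = 0 is constant; equivalently, every non-constant monomial occurring in f is divisible by x, y, or z. -/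
/-!
Differentiating the invariance `ρ_λ f = f` at `λ = 0` shows that `f` is killed by the derivation
`D = x^{m+1} ∂_s + y^{m+1} ∂_t + z^{m+1} ∂_u + (xyz)^m ∂_v`. Suppose a monomial `w` in `s, t, u, v`
alone occurs in `f`, say with `w_s ≠ 0`. Then `x^{m+1} w / s` occurs in `D f` with coefficient
`w_s · coeff_w f`: no other term of `D` can produce it, because the exponents of `x, y, z` in the
four shifts are pairwise incomparable once `m ≥ 1`, and `w` has no `x, y, z`. Hence `coeff_w f = 0`.
-/

open MvPolynomial

/-- The comorphism `ρ_λ` of the additive group action on `ℂ⁷` (Roberts/Section 4):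
`x ↦ x`, `y ↦ y`, `z ↦ z`, `s ↦ s + λx^{m+1}`, `t ↦ t + λy^{m+1}`,
`u ↦ u + λz^{m+1}`, `v ↦ v + λx^m y^m z^m`
(variables `X 0 = x`, `X 1 = y`, `X 2 = z`, `X 3 = s`, `X 4 = t`, `X 5 = u`, `X 6 = v`). -/
noncomputable def robertsRho (m : ℕ) (l : ℂ) :
    MvPolynomial (Fin 7) ℂ →ₐ[ℂ] MvPolynomial (Fin 7) ℂ :=
  aeval ![X 0, X 1, X 2,
          X 3 + C l * X 0 ^ (m + 1),
          X 4 + C l * X 1 ^ (m + 1),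
          X 5 + C l * X 2 ^ (m + 1),
          X 6 + C l * X 0 ^ m * X 1 ^ m * X 2 ^ m]

namespace MvPolynomial

section Flow

variable {σ R : Type*} [CommRing R]

/-- The substitution `X i ↦ X i + λ • g i` with `λ` kept as the formal variable of `Polynomial`;
its coefficient of `λ` is the derivation `∑ i, g i • ∂ᵢ`. -/
noncomputable def flow (g : σ → MvPolynomial σ R) :
    MvPolynomial σ R →ₐ[R] Polynomial (MvPolynomial σ R) :=
  aeval fun i => Polynomial.C (X i) + Polynomial.X * Polynomial.C (g i)

theorem eval_C_flow (g : σ → MvPolynomial σ R) (l : R) (p : MvPolynomial σ R) :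
    (flow g p).eval (C l) = aeval (fun i => X i + C l * g i) p := by
  change Polynomial.evalRingHom (C l) (eval₂ _ _ p) = _
  rw [eval₂_comp_left, aeval_def]
  congr 1
  · ext; simp
  · funext i; simp [mul_comm (g i)]

theorem coeff_zero_flow (g : σ → MvPolynomial σ R) (p : MvPolynomial σ R) :
    (flow g p).coeff 0 = p := by
  rw [Polynomial.coeff_zero_eq_eval_zero, ← C_0, eval_C_flow]
  simp

theorem coeff_one_flow [Fintype σ] (g : σ → MvPolynomial σ R) (p : MvPolynomial σ R) :
    (flow g p).coeff 1 = ∑ i, g i * pderiv i p := by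
  classical
  induction p using MvPolynomial.induction_on with
  | C a => simp [flow]
  | add p q hp hq => simp [hp, hq, mul_add, Finset.sum_add_distrib]
  | mul_X p j hp =>
    have hX : (flow g) (X j) = Polynomial.C (X j) + Polynomial.C (g j) * Polynomial.X := by
      simp only [flow, aeval_X, Polynomial.X_mul_C]
    rw [map_mul, hX, mul_add, ← mul_assoc, Polynomial.coeff_add, Polynomial.coeff_mul_C,
      Polynomial.coeff_mul_X, Polynomial.coeff_mul_C, coeff_zero_flow, hp]
    simp only [Finset.sum_mul, Derivation.leibniz, pderiv_X, Pi.single_apply, smul_eq_mul, mul_ite,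
      mul_one, mul_zero, mul_add, Finset.sum_add_distrib, Finset.sum_ite_eq, Finset.mem_univ,
      ↓reduceIte]
    rw [add_comm, mul_comm p]
    exact congrArg _ (Finset.sum_congr rfl fun i _ => by ring)

theorem sum_mul_pderiv_eq_zero_of_forall_aeval_eq [Fintype σ] [IsDomain R] [Infinite R]
    {g : σ → MvPolynomial σ R} {f : MvPolynomial σ R}
    (hf : ∀ l : R, aeval (fun i => X i + C l * g i) f = f) :
    ∑ i, g i * pderiv i f = 0 := by
  have hflow : flow g f = Polynomial.C f := by
    refine Polynomial.eq_of_infinite_eval_eq _ _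
      ((Set.infinite_range_of_injective (C_injective σ R)).mono ?_)
    rintro _ ⟨l, rfl⟩
    simp only [Set.mem_ofPred_eq, eval_C_flow, hf, Polynomial.eval_C]
  rw [← coeff_one_flow, hflow, Polynomial.coeff_C_succ]

end Flow

theorem coeff_eq_zero_of_sum_monomial_mul_pderiv_eq_zero {σ R : Type*} [Fintype σ]
    [DecidableEq σ] [CommRing R] [IsDomain R] [CharZero R] {a : σ → σ →₀ ℕ} {c : σ → R}
    {f : MvPolynomial σ R} (hD : ∑ k, monomial (a k) (c k) * pderiv k f = 0)
    {w : σ →₀ ℕ} {j : σ} (hwj : w j ≠ 0) (hcj : c j ≠ 0)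
    (hsep : ∀ k ≠ j, c k ≠ 0 → ∃ i, w i = 0 ∧ a j i < a k i) :
    coeff w f = 0 := by
  have hw : w - Finsupp.single j 1 + Finsupp.single j 1 = w :=
    tsub_add_cancel_of_le (Finsupp.single_le_iff.mpr (Nat.one_le_iff_ne_zero.mpr hwj))
  have key := congrArg (coeff (a j + (w - Finsupp.single j 1))) hD
  rw [coeff_sum, Finset.sum_eq_single j, coeff_monomial_mul', if_pos le_self_add,
    add_tsub_cancel_left, coeff_pderiv, hw, coeff_zero] at key
  · rw [mul_eq_zero, mul_eq_zero, or_iff_right hcj] at key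
    exact key.resolve_right (Nat.cast_add_one_ne_zero _)
  · intro k _ hkj
    rw [coeff_monomial_mul']
    by_cases hck : c k = 0
    · simp [hck]
    obtain ⟨i, hwi, hlt⟩ := hsep k hkj hck
    have hnle : ¬ a k ≤ a j + (w - Finsupp.single j 1) :=
      fun hle => (hle i).not_gt (by simpa [hwi] using hlt)
    rw [if_neg hnle]
  · simp

theorem aeval_ite_zero_X_eq_C_coeff_zero {σ R : Type*} [CommRing R] {p : σ → Prop}
    [DecidablePred p] {f : MvPolynomial σ R}
    (hf : ∀ w ≠ 0, (∀ i, p i → w i = 0) → coeff w f = 0) :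
    aeval (fun i => if p i then 0 else X i) f = C (coeff 0 f) := by
  classical
  rw [aeval_def, eval₂_eq, Finset.sum_eq_single 0]
  · simp
  · intro w hw hw0
    obtain ⟨i, hi, hwi⟩ : ∃ i, p i ∧ w i ≠ 0 := by
      by_contra! hcon
      exact mem_support_iff.mp hw (hf w hw0 hcon)
    exact mul_eq_zero_of_right _
      (Finset.prod_eq_zero (Finsupp.mem_support_iff.mpr hwi) (by simp [hi, hwi]))
  · intro h0
    simp [notMem_support_iff.mp h0]

end MvPolynomial

/-- `ρ_λ` translates `X i` (for `3 ≤ i`) by `λ` times the monomial with exponent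
`robertsExponent m i`; the first three entries are placeholders. -/
noncomputable def robertsExponent (m : ℕ) : Fin 7 → Fin 7 →₀ ℕ :=
  ![0, 0, 0, Finsupp.single 0 (m + 1), Finsupp.single 1 (m + 1), Finsupp.single 2 (m + 1),
    Finsupp.single 0 m + Finsupp.single 1 m + Finsupp.single 2 m]

theorem robertsRho_eq_aeval (m : ℕ) (l : ℂ) :
    robertsRho m l =
      aeval fun i => X i + C l * monomial (robertsExponent m i) (if 3 ≤ i then 1 else 0) := by
  apply algHom_ext
  intro i
  fin_cases i <;>
    simp [robertsRho, robertsExponent, X_pow_eq_monomial, monomial_mul, mul_assoc, add_assoc]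

theorem robertsExponent_separated {m : ℕ} (hm : 1 ≤ m) {j k : Fin 7} (hj : 3 ≤ j) (hk : 3 ≤ k)
    (hkj : k ≠ j) : ∃ i < 3, robertsExponent m j i < robertsExponent m k i := by
  fin_cases j <;> fin_cases k <;> simp_all [robertsExponent, Fin.exists_fin_succ] <;> omega

theorem coeff_eq_zero_of_forall_robertsRho_eq {m : ℕ} (hm : 1 ≤ m) {f : MvPolynomial (Fin 7) ℂ}
    (hf : ∀ l : ℂ, robertsRho m l f = f) {w : Fin 7 →₀ ℕ} (hw0 : w ≠ 0)
    (hw : ∀ i < 3, w i = 0) : coeff w f = 0 := by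
  have hD := sum_mul_pderiv_eq_zero_of_forall_aeval_eq fun l => (robertsRho_eq_aeval m l ▸ hf l)
  obtain ⟨j, hj⟩ := Finsupp.ne_iff.mp hw0
  have h3j : 3 ≤ j := le_of_not_gt fun hlt => hj (hw j hlt)
  refine coeff_eq_zero_of_sum_monomial_mul_pderiv_eq_zero hD hj (by simp [h3j]) fun k hkj hk => ?_
  obtain ⟨i, hi, hlt⟩ := robertsExponent_separated hm h3j (by simpa using hk) hkj
  exact ⟨i, hw i hi, hlt⟩

/-- **Roberts' lemma:** if `f` is invariant under all `ρ_λ` (for fixed `m ≥ 2`), then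
substituting `x = y = z = 0` into `f` yields a constant polynomial; equivalently every
non-constant monomial of `f` is divisible by `x`, `y` or `z`. -/
theorem roberts_invariants_vanish_modulo_xyz (m : ℕ) (hm : 2 ≤ m)
    (f : MvPolynomial (Fin 7) ℂ) (hf : ∀ l : ℂ, robertsRho m l f = f) :
    ∃ c : ℂ,
      aeval (fun i : Fin 7 => if i = 0 ∨ i = 1 ∨ i = 2 then 0 else X i) f = C c :=
  ⟨coeff 0 f, aeval_ite_zero_X_eq_C_coeff_zero fun w hw0 hw =>
    coeff_eq_zero_of_forall_robertsRho_eq (by omega) hf hw0 fun i hi => hw i (by omega)⟩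
end
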